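/- Let φ be a real-valued measurable function on ℝ with |φ(x)| ≤ M⟨x⟩^{−δ} for some M > 0 and δ > 5/2, and assume ∫_ℝ φ(x) dx ≠ 0. Then there exist a constant λ₀ ∈ (0, 1) and constants 0 < C₁ < C₂ (all depending on φ) such that for every 0 < λ < λ₀: C₁/λ ≤ |Im F^±(λ²)| ≤ C₂/λ. -/

import Mathlib

/-!
Taking imaginary parts, `Im F^±(λ²) = ±(2λ)⁻¹ ∫∫ cos(λ|x - y|) φ(y) φ(x) dy dx`. Since `δ > 1`,
`φ` is integrable, so by dominated convergence the double integral is continuous in `λ`; at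
`λ = 0` it equals `(∫ φ)² > 0`. Hence for small `λ` it lies between `(∫ φ)² / 2` and `2 (∫ φ)²`,
and `|Im F^±(λ²)|` is comparable to `1 / λ`.
-/

open MeasureTheory Set

/-- `F^±(λ²) = ⟨R₀^±(λ²)φ, φ⟩` for the one-dimensional free resolvent, whose kernel is
`(±i/(2λ)) e^{±iλ|x−y|}`; the sign `±` is encoded by `σ ∈ {1, -1}`. -/
noncomputable def resolventFormD1 (σ : ℝ) (φ : ℝ → ℝ) (l : ℝ) : ℂ :=
  ∫ x : ℝ, ∫ y : ℝ,
    ((σ : ℂ) * Complex.I / (2 * (l : ℂ))) *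
      Complex.exp ((σ : ℂ) * Complex.I * (l : ℂ) * ((|x - y| : ℝ) : ℂ)) *
      (φ y : ℂ) * (φ x : ℂ)

open Filter Topology Module

lemma integrable_of_norm_le_japanese_rpow {E F : Type*} [NormedAddCommGroup E] [NormedSpace ℝ E]
    [FiniteDimensional ℝ E] [MeasurableSpace E] [BorelSpace E] [NormedAddCommGroup F]
    {μ : Measure E} [μ.IsAddHaarMeasure] {f : E → F} (hf : AEStronglyMeasurable f μ) {M r : ℝ}
    (hr : finrank ℝ E < r) (hbound : ∀ x, ‖f x‖ ≤ M * Real.sqrt (1 + ‖x‖ ^ 2) ^ (-r)) :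
    Integrable f μ := by
  refine ((integrable_rpow_neg_one_add_norm_sq hr).const_mul M).mono' hf
    (.of_forall fun x => (hbound x).trans_eq ?_)
  rw [Real.sqrt_eq_rpow, ← Real.rpow_mul (by positivity)]
  ring_nf

noncomputable def cosPairing (φ : ℝ → ℝ) (l : ℝ) : ℝ :=
  ∫ p : ℝ × ℝ, Real.cos (l * |p.1 - p.2|) * φ p.2 * φ p.1 ∂volume.prod volume

variable {φ : ℝ → ℝ}

lemma cosPairing_neg (l : ℝ) : cosPairing φ (-l) = cosPairing φ l := by
  simp only [cosPairing, neg_mul, Real.cos_neg]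

lemma cosPairing_zero : cosPairing φ 0 = (∫ x, φ x) ^ 2 := by
  simp only [cosPairing, zero_mul, Real.cos_zero, one_mul, sq, mul_comm (φ (Prod.snd _))]
  exact integral_prod_mul φ φ

lemma continuous_cosPairing (hφ : Integrable φ) : Continuous (cosPairing φ) := by
  refine continuous_of_dominated (bound := fun p => |φ p.2 * φ p.1|) (fun l => ?_)
    (fun l => .of_forall fun p => ?_) ?_ (.of_forall fun p => by fun_prop)
  · exact ((Continuous.aestronglyMeasurable (by fun_prop)).mul
      hφ.aestronglyMeasurable.comp_snd).mul hφ.aestronglyMeasurable.comp_fst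
  · rw [Real.norm_eq_abs, mul_assoc, abs_mul]
    exact mul_le_of_le_one_left (abs_nonneg _) (Real.abs_cos_le_one _)
  · simp only [mul_comm (φ (Prod.snd _))]
    exact (hφ.mul_prod hφ).abs

lemma im_resolventFormD1 (hφ : Integrable φ) (σ l : ℝ) :
    (resolventFormD1 σ φ l).im = σ / (2 * l) * cosPairing φ (σ * l) := by
  set c : ℝ × ℝ → ℂ := fun p => ((σ : ℂ) * Complex.I / (2 * (l : ℂ))) *
      Complex.exp ((σ : ℂ) * Complex.I * (l : ℂ) * ((|p.1 - p.2| : ℝ) : ℂ)) *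
      (φ p.2 : ℂ) * (φ p.1 : ℂ)
  have hphase (p : ℝ × ℝ) : (σ : ℂ) * Complex.I * l * ((|p.1 - p.2| : ℝ) : ℂ)
      = ((σ * l * |p.1 - p.2| : ℝ) : ℂ) * Complex.I := by
    push_cast; ring
  have hc (p : ℝ × ℝ) : c p = (σ * Complex.I / (2 * l)) *
      (Complex.exp (((σ * l * |p.1 - p.2| : ℝ) : ℂ) * Complex.I) * ((φ p.2 * φ p.1 : ℝ) : ℂ)) := by
    simp only [c, hphase, Complex.ofReal_mul (φ _)]; ring
  have hc_int : Integrable c (volume.prod volume) := by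
    rw [funext hc]
    refine Integrable.const_mul (Integrable.bdd_mul (c := 1) ?_ ?_ ?_) _
    · simp only [mul_comm (φ (Prod.snd _))]
      exact (hφ.mul_prod hφ).ofReal
    · exact Continuous.aestronglyMeasurable (by fun_prop)
    · exact .of_forall fun p => (Complex.norm_exp_ofReal_mul_I _).le
  have hc_im (p : ℝ × ℝ) :
      (c p).im = σ / (2 * l) * (Real.cos (σ * l * |p.1 - p.2|) * φ p.2 * φ p.1) := by
    have hconst : (σ : ℂ) * Complex.I / (2 * l) = ((σ / (2 * l) : ℝ) : ℂ) * Complex.I := by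
      push_cast; ring
    rw [hc, hconst, mul_assoc, Complex.im_ofReal_mul, Complex.I_mul_im, mul_comm (Complex.exp _),
      Complex.re_ofReal_mul, Complex.exp_ofReal_mul_I_re]
    ring
  rw [resolventFormD1, integral_integral hc_int, ← RCLike.im_to_complex, ← integral_im hc_int]
  simp only [RCLike.im_to_complex, hc_im, integral_const_mul, cosPairing]

lemma abs_im_resolventFormD1 (hφ : Integrable φ) {σ : ℝ} (hσ : σ = 1 ∨ σ = -1) {l : ℝ}
    (hl : 0 < l) : |(resolventFormD1 σ φ l).im| = |cosPairing φ l| / (2 * l) := by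
  rw [im_resolventFormD1 hφ, abs_mul, abs_div, abs_of_pos (by positivity : 0 < 2 * l)]
  rcases hσ with rfl | rfl <;>
    simp only [cosPairing_neg, one_mul, neg_mul, one_div, abs_neg, abs_one] <;> ring

theorem low_energy_ImF_two_sided_d1_general (φ : ℝ → ℝ) (M δ : ℝ) (hφ : Measurable φ)
    (hδ : 5/2 < δ)
    (hdecay : ∀ x : ℝ, |φ x| ≤ M * Real.sqrt (1 + x ^ 2) ^ (-δ))
    (hmean : (∫ x : ℝ, φ x) ≠ 0) :
    ∃ lam₀ ∈ Ioo (0:ℝ) 1, ∃ C₁ C₂ : ℝ, 0 < C₁ ∧ C₁ < C₂ ∧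
      ∀ σ : ℝ, (σ = 1 ∨ σ = -1) → ∀ l ∈ Ioo (0:ℝ) lam₀,
        C₁ / l ≤ |(resolventFormD1 σ φ l).im| ∧
        |(resolventFormD1 σ φ l).im| ≤ C₂ / l := by
  have hφ_int : Integrable φ := integrable_of_norm_le_japanese_rpow hφ.aestronglyMeasurable
    (by simp only [finrank_self, Nat.cast_one]; linarith)
    (by simpa only [Real.norm_eq_abs, sq_abs] using hdecay)
  have hA : 0 < (∫ x, φ x) ^ 2 := by positivity
  have hlim : Tendsto (fun l => |cosPairing φ l|) (𝓝[>] 0) (𝓝 ((∫ x, φ x) ^ 2)) := by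
    have : Tendsto (fun l => |cosPairing φ l|) (𝓝[>] 0) (𝓝 |cosPairing φ 0|) :=
      (continuous_cosPairing hφ_int).abs.continuousWithinAt
    rwa [cosPairing_zero, abs_of_pos hA] at this
  obtain ⟨u, hu, hsub⟩ := mem_nhdsGT_iff_exists_Ioo_subset.1
    (hlim (Ioo_mem_nhds (half_lt_self hA) (by linarith : _ < 2 * (∫ x, φ x) ^ 2)))
  refine ⟨min u (1 / 2), ⟨lt_min hu (by norm_num), (min_le_right _ _).trans_lt (by norm_num)⟩,
    (∫ x, φ x) ^ 2 / 4, (∫ x, φ x) ^ 2, by positivity, by linarith, fun σ hσ l hl => ?_⟩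
  obtain ⟨hl0, hlu⟩ := hl
  obtain ⟨hlo, hhi⟩ := hsub ⟨hl0, hlu.trans_le (min_le_left _ _)⟩
  rw [abs_im_resolventFormD1 hφ_int hσ hl0, ← div_div]
  constructor <;> gcongr ?_ / _ <;> linarith

/-- Lemma 2.2 (i) of the paper, case `d = 1`: two-sided low-energy bounds for `Im F^±`
when `∫ φ ≠ 0`. -/
theorem low_energy_ImF_two_sided_d1 (φ : ℝ → ℝ) (M δ : ℝ) (hφ : Measurable φ)
    (hM : 0 < M) (hδ : 5/2 < δ)
    (hdecay : ∀ x : ℝ, |φ x| ≤ M * Real.sqrt (1 + x ^ 2) ^ (-δ))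
    (hmean : (∫ x : ℝ, φ x) ≠ 0) :
    ∃ lam₀ ∈ Ioo (0:ℝ) 1, ∃ C₁ C₂ : ℝ, 0 < C₁ ∧ C₁ < C₂ ∧
      ∀ σ : ℝ, (σ = 1 ∨ σ = -1) → ∀ l ∈ Ioo (0:ℝ) lam₀,
        C₁ / l ≤ |(resolventFormD1 σ φ l).im| ∧
        |(resolventFormD1 σ φ l).im| ≤ C₂ / l :=
  low_energy_ImF_two_sided_d1_general φ M δ hφ hδ hdecay hmean
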